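/- Let G be a graph with vertex set partitioned as S ∪ T with |S| = s, |T| = n − s, s ≤ n − s, such that every vertex of S has degree at most s in G. Then there is a graph Γ obtainable from G by a sequence of Kelmans operations in which S is an independent set, each vertex u ∈ S satisfies deg_Γ(u) ≤ s, and all neighbors of vertices of S lie in a fixed set of at most s vertices of T. -/

import Mathlib

open SimpleGraph

/-- Auxiliary (ordered) adjacency for the Kelmans transformation `G[x → y]`:
the edge `xy` is kept if present; an edge `xz` (`z ∉ {x, y}`) survives at `x` only if
`z` is also a neighbor of `y`; `y` becomes adjacent to the former neighbors of `x`
in addition to its own. -/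
def kelmansAux {V : Type*} (G : SimpleGraph V) (x y a b : V) : Prop :=
  (a = x ∧ b = y ∧ G.Adj x y) ∨
  (a = x ∧ b ≠ x ∧ b ≠ y ∧ G.Adj x b ∧ G.Adj y b) ∨
  (a = y ∧ b ≠ x ∧ b ≠ y ∧ (G.Adj y b ∨ G.Adj x b)) ∨
  (a ≠ x ∧ a ≠ y ∧ b ≠ x ∧ b ≠ y ∧ G.Adj a b)

/-- The Kelmans transformation `G[x → y]`: every edge `xz` with `z ∉ N(y) ∪ {y}` is
replaced by the edge `yz`. -/
def kelmans {V : Type*} (G : SimpleGraph V) (x y : V) : SimpleGraph V where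
  Adj a b := kelmansAux G x y a b ∨ kelmansAux G x y b a
  symm := by constructor; intro a b h; exact h.symm
  loopless := by
    constructor; intro a h
    rcases h with h | h <;>
      rcases h with ⟨rfl, rfl, h⟩ | ⟨rfl, h, _⟩ | ⟨rfl, h, _⟩ | ⟨h, _, _⟩ <;>
      simp_all [G.loopless]

/-- `H` is obtainable from `G` by a (finite) sequence of Kelmans operations. -/
def KelmansReachable {V : Type*} (G H : SimpleGraph V) : Prop :=
  ∃ l : List (V × V), H = l.foldl (fun G' p => kelmans G' p.1 p.2) G

section KelmansHelpers

variable {V : Type*} {G : SimpleGraph V} {z r w b : V}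

lemma kelmans_adj : (kelmans G z r).Adj w b ↔ kelmansAux G z r w b ∨ kelmansAux G z r b w := Iff.rfl

lemma adj_src (hzr : z ≠ r) (h : (kelmans G z r).Adj z b) : G.Adj z b := by
  rw [kelmans_adj] at h
  unfold kelmansAux at h
  rcases h with h | h <;> [skip; skip] <;>
    rcases h with ⟨h1, h2, h3⟩ | ⟨h1, h2, h3, h4, h5⟩ | ⟨h1, h2, h3, h4⟩ | ⟨h1, h2, h3, h4, h5⟩ <;>
    simp_all [G.adj_comm]

lemma adj_at_z (hzr : z ≠ r) (hw : w ≠ z) (hwr : w ≠ r) :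
    (kelmans G z r).Adj w z ↔ G.Adj w z ∧ G.Adj w r := by
  rw [kelmans_adj]; unfold kelmansAux
  constructor
  · rintro (h | h) <;>
      rcases h with ⟨h1, h2, h3⟩ | ⟨h1, h2, h3, h4, h5⟩ | ⟨h1, h2, h3, h4⟩ | ⟨h1, h2, h3, h4, h5⟩ <;>
      simp_all [G.adj_comm]
  · rintro ⟨h1, h2⟩
    right; right; left; exact ⟨rfl, hw, hwr, h1.symm, h2.symm⟩

lemma adj_at_r (hzr : z ≠ r) (hw : w ≠ z) (hwr : w ≠ r) :
    (kelmans G z r).Adj w r ↔ G.Adj w r ∨ G.Adj w z := by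
  rw [kelmans_adj]; unfold kelmansAux
  constructor
  · rintro (h | h) <;>
      rcases h with ⟨h1, h2, h3⟩ | ⟨h1, h2, h3, h4, h5⟩ | ⟨h1, h2, h3, h4⟩ | ⟨h1, h2, h3, h4, h5⟩ <;>
      simp_all [G.adj_comm]
  · rintro (h | h)
    · right; right; right; left; exact ⟨rfl, hw, hwr, Or.inl h.symm⟩
    · right; right; right; left; exact ⟨rfl, hw, hwr, Or.inr h.symm⟩

lemma adj_other (hw : w ≠ z) (hwr : w ≠ r) (hb : b ≠ z) (hbr : b ≠ r) :
    (kelmans G z r).Adj w b ↔ G.Adj w b := by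
  rw [kelmans_adj]; unfold kelmansAux
  constructor
  · rintro (h | h) <;>
      rcases h with ⟨h1, h2, h3⟩ | ⟨h1, h2, h3, h4, h5⟩ | ⟨h1, h2, h3, h4⟩ | ⟨h1, h2, h3, h4, h5⟩ <;>
      simp_all [G.adj_comm]
  · intro h; left; right; right; right; exact ⟨hw, hwr, hb, hbr, h⟩

lemma reach_step {Γ : SimpleGraph V}
    (h : KelmansReachable (kelmans G z r) Γ) : KelmansReachable G Γ := by
  obtain ⟨l, hl⟩ := h
  exact ⟨(z, r) :: l, by simpa using hl⟩

lemma main_aux [Fintype V] [DecidableEq V] (S R : Finset V) (s : ℕ)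
    (hRS : ∀ x ∈ R, x ∉ S) (hRcard : R.card = s) :
    ∀ n (G : SimpleGraph V), (∀ u ∈ S, (G.neighborSet u).ncard ≤ s) →
      (∑ u ∈ S, (G.neighborSet u \ ↑R).ncard) ≤ n →
      ∃ Γ, KelmansReachable G Γ ∧ ∀ u ∈ S, Γ.neighborSet u ⊆ ↑R := by
  intro n
  induction n with
  | zero =>
    intro G hdeg hmu
    refine ⟨G, ⟨[], rfl⟩, fun u hu v hv => ?_⟩
    by_contra hvR
    have h0 : (G.neighborSet u \ ↑R).ncard = 0 :=
      Nat.eq_zero_of_le_zero <| le_trans (Finset.single_le_sum (f := fun u => (G.neighborSet u \ ↑R).ncard) (fun i _ => Nat.zero_le _) hu) hmu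
    rw [Set.ncard_eq_zero (Set.toFinite _)] at h0
    exact absurd h0 (Set.nonempty_iff_ne_empty.mp ⟨v, hv, hvR⟩)
  | succ n ih =>
    intro G hdeg hmu
    by_cases hall : ∀ u ∈ S, G.neighborSet u ⊆ ↑R
    · exact ⟨G, ⟨[], rfl⟩, hall⟩
    push_neg at hall
    obtain ⟨u, hu, hnsub⟩ := hall
    obtain ⟨z, hz, hzR⟩ := Set.not_subset.mp hnsub
    -- find r ∈ R not adjacent to u
    have hr : ∃ r ∈ R, ¬ G.Adj u r := by
      by_contra hc
      push_neg at hc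
      have hsub : ↑(insert z R) ⊆ G.neighborSet u := by
        intro x hx
        rcases Finset.mem_insert.mp (by exact_mod_cast hx) with rfl | hx
        · exact hz
        · exact hc x hx
      have h1 : (insert z R).card ≤ (G.neighborSet u).ncard := by
        calc (insert z R).card = (↑(insert z R) : Set V).ncard := (Set.ncard_coe_finset _).symm
          _ ≤ _ := Set.ncard_le_ncard hsub (Set.toFinite _)
      rw [Finset.card_insert_of_notMem (fun h => hzR (by exact_mod_cast h)), hRcard] at h1
      exact absurd (le_trans h1 (hdeg u hu)) (by omega)
    obtain ⟨r, hrR, hur⟩ := hr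
    have huS : u ∈ S := hu
    have hzr : z ≠ r := fun h => hzR (h ▸ (by exact_mod_cast hrR))
    have huz : u ≠ z := G.ne_of_adj hz
    have hur' : u ≠ r := fun h => (hRS r hrR) (h ▸ hu)
    -- Claim A : for all w ∈ S, new bad set ⊆ old bad set
    have claimA : ∀ w ∈ S, (kelmans G z r).neighborSet w \ ↑R ⊆ G.neighborSet w \ ↑R := by
      intro w hw b hb
      obtain ⟨hb1, hb2⟩ := hb
      by_cases hwz : w = z
      · subst hwz
        exact ⟨adj_src hzr hb1, hb2⟩
      · have hwr : w ≠ r := fun h => (hRS r hrR) (h ▸ hw)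
        by_cases hbz : b = z
        · subst hbz
          exact ⟨((adj_at_z hzr hwz hwr).mp hb1).1, hb2⟩
        · by_cases hbr : b = r
          · exact absurd (hbr ▸ (by exact_mod_cast hrR : (r : V) ∈ (↑R : Set V))) hb2
          · exact ⟨(adj_other hwz hwr hbz hbr).mp hb1, hb2⟩
    -- Claim B : degree bound preserved
    have claimB : ∀ w ∈ S, ((kelmans G z r).neighborSet w).ncard ≤ s := by
      intro w hw
      by_cases hwz : w = z
      · subst hwz
        refine le_trans (Set.ncard_le_ncard (fun b hb => adj_src hzr hb) (Set.toFinite _)) (hdeg _ hw)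
      · have hwr : w ≠ r := fun h => (hRS r hrR) (h ▸ hw)
        by_cases h1 : G.Adj w r
        · refine le_trans (Set.ncard_le_ncard ?_ (Set.toFinite _)) (hdeg _ hw)
          intro b hb
          by_cases hbz : b = z
          · exact hbz ▸ ((adj_at_z hzr hwz hwr).mp (hbz ▸ hb)).1
          · by_cases hbr : b = r
            · exact hbr ▸ h1
            · exact (adj_other hwz hwr hbz hbr).mp hb
        · by_cases h2 : G.Adj w z
          · have hsub : (kelmans G z r).neighborSet w ⊆ insert r (G.neighborSet w \ {z}) := by
              intro b hb
              by_cases hbz : b = z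
              · exact absurd ((adj_at_z hzr hwz hwr).mp (hbz ▸ hb)).2 h1
              · by_cases hbr : b = r
                · rw [hbr]; exact Set.mem_insert r _
                · exact Set.mem_insert_of_mem _ ⟨(adj_other hwz hwr hbz hbr).mp hb, hbz⟩
            calc ((kelmans G z r).neighborSet w).ncard
                ≤ (insert r (G.neighborSet w \ {z})).ncard :=
                  Set.ncard_le_ncard hsub (Set.toFinite _)
              _ ≤ (G.neighborSet w \ {z}).ncard + 1 := Set.ncard_insert_le _ _
              _ = (G.neighborSet w).ncard := Set.ncard_diff_singleton_add_one h2 (Set.toFinite _)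
              _ ≤ s := hdeg _ hw
          · refine le_trans (Set.ncard_le_ncard ?_ (Set.toFinite _)) (hdeg _ hw)
            intro b hb
            by_cases hbz : b = z
            · exact absurd ((adj_at_z hzr hwz hwr).mp (hbz ▸ hb)).1 (hbz ▸ h2)
            · by_cases hbr : b = r
              · rcases (adj_at_r hzr hwz hwr).mp (hbr ▸ hb) with h | h
                · exact absurd h h1
                · exact absurd h h2
              · exact (adj_other hwz hwr hbz hbr).mp hb
    -- Claim C : strict decrease at u
    have claimC : ((kelmans G z r).neighborSet u \ ↑R).ncard < (G.neighborSet u \ ↑R).ncard := by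
      have hzmem : z ∈ G.neighborSet u \ ↑R := ⟨hz, hzR⟩
      have hznot : z ∉ (kelmans G z r).neighborSet u \ ↑R := by
        rintro ⟨h, -⟩
        exact hur ((adj_at_z hzr huz hur').mp h).2
      have hsub : (kelmans G z r).neighborSet u \ ↑R ⊆ (G.neighborSet u \ ↑R) \ {z} := by
        intro b hb
        exact ⟨claimA u hu hb, fun h => hznot (h ▸ hb)⟩
      calc ((kelmans G z r).neighborSet u \ ↑R).ncard
          ≤ ((G.neighborSet u \ ↑R) \ {z}).ncard := Set.ncard_le_ncard hsub (Set.toFinite _)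
        _ < (G.neighborSet u \ ↑R).ncard :=
            Set.ncard_diff_singleton_lt_of_mem hzmem (Set.toFinite _)
    have hsum : (∑ w ∈ S, ((kelmans G z r).neighborSet w \ ↑R).ncard)
        < ∑ w ∈ S, (G.neighborSet w \ ↑R).ncard := by
      refine Finset.sum_lt_sum (fun w hw => ?_) ⟨u, hu, claimC⟩
      exact Set.ncard_le_ncard (claimA w hw) (Set.toFinite _)
    obtain ⟨Γ, hreach, hΓ⟩ := ih (kelmans G z r) claimB (by omega)
    exact ⟨Γ, reach_step hreach, hΓ⟩

end KelmansHelpers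

/-- Combined effect of Algorithms 1 and 2: if the vertex set is partitioned into `S` and
`T = Sᶜ` with `|S| = s ≤ |T| = n - s` and every vertex of `S` has degree at most `s`,
then by a sequence of Kelmans operations one reaches a graph `Γ` in which `S` is
independent, every vertex of `S` still has degree at most `s`, and all neighbors of the
vertices of `S` lie in a common subset of `T` of size at most `s`. -/

theorem kelmans_algorithm {V : Type*} [Fintype V] [DecidableEq V]
    (G : SimpleGraph V) (S : Finset V) {s : ℕ} (hS : S.card = s)
    (hsmall : s ≤ Fintype.card V - s)
    (hdeg : ∀ u ∈ S, (G.neighborSet u).ncard ≤ s) :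
    ∃ Γ : SimpleGraph V, KelmansReachable G Γ ∧
      (∀ u ∈ S, ∀ v ∈ S, ¬ Γ.Adj u v) ∧
      (∀ u ∈ S, (Γ.neighborSet u).ncard ≤ s) ∧
      ∃ R : Finset V, R ⊆ Sᶜ ∧ R.card ≤ s ∧
        ∀ u ∈ S, ∀ v : V, Γ.Adj u v → v ∈ R := by
  obtain ⟨R, hRsub, hRcard⟩ := Finset.exists_subset_card_eq (s := Sᶜ) (n := s)
    (by rw [Finset.card_compl, hS]; exact hsmall)
  have hRS : ∀ x ∈ R, x ∉ S := fun x hx => Finset.mem_compl.mp (hRsub hx)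
  obtain ⟨Γ, hreach, hΓ⟩ := main_aux S R s hRS hRcard
    (∑ u ∈ S, (G.neighborSet u \ ↑R).ncard) G hdeg le_rfl
  refine ⟨Γ, hreach, ?_, ?_, R, hRsub, le_of_eq hRcard, ?_⟩
  · intro u hu v hv hadj
    exact hRS v (by exact_mod_cast hΓ u hu hadj) hv
  · intro u hu
    calc (Γ.neighborSet u).ncard ≤ (↑R : Set V).ncard :=
          Set.ncard_le_ncard (hΓ u hu) (Set.toFinite _)
      _ = R.card := Set.ncard_coe_finset R
      _ = s := hRcard
  · intro u hu v hadj
    exact_mod_cast hΓ u hu hadj
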